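/- Let G = U(T₁,…,T_g) be a unicyclic graph of order n with cycle C_g = u₁⋯u_g and branches T_i of orders n_i, and suppose p ≠ q with n_p, n_q ≥ 2. Form G₁ by moving the whole branch T_q (minus u_q) onto u_p (i.e., T_p^{(1)} is T_p and T_q identified at u_p = u_q, T_q^{(1)} is the single vertex u_q), and form G₂ symmetrically by moving T_p onto u_q. Then W(G) − W(G₁) = (n_p−1)(n_q−1)d_G(u_p,u_q) + (n_q−1)Σ_{i≠p,q} n_i(d_G(u_q,u_i) − d_G(u_p,u_i)) and W(G) − W(G₂) = (n_p−1)(n_q−1)d_G(u_p,u_q) − (n_p−1)Σ_{i≠p,q} n_i(d_G(u_q,u_i) − d_G(u_p,u_i)); consequently W(G) > min{W(G₁), W(G₂)}. -/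

import Mathlib

open SimpleGraph Finset

noncomputable def wienerIndex {V : Type*} [Fintype V] (G : SimpleGraph V) : ℕ :=
  (∑ u : V, ∑ v : V, G.dist u v) / 2

noncomputable def vertexDist {V : Type*} [Fintype V] (G : SimpleGraph V) (u : V) : ℕ :=
  ∑ v : V, G.dist u v

/-- The unicyclic graph `U(T₁,…,T_g)`: from the cycle `C_g` on vertices `u₀,…,u_{g-1}`,
identify `u_i` with the root `r i` of the tree `T i`.  The vertex set is the disjoint
union `Σ i, V i`; the edges are the tree edges inside each branch together with the cycle
edges joining consecutive roots. -/
def cycleTrees {g : ℕ} [NeZero g] {V : Fin g → Type*} (T : ∀ i, SimpleGraph (V i)) (r : ∀ i, V i) :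
    SimpleGraph (Σ i, V i) :=
  SimpleGraph.fromRel fun a b =>
    (∃ (i : Fin g) (x y : V i), a = ⟨i, x⟩ ∧ b = ⟨i, y⟩ ∧ (T i).Adj x y) ∨
    (∃ i : Fin g, a = ⟨i, r i⟩ ∧ b = ⟨i + 1, r (i + 1)⟩)

/-- The graph obtained from `U(T₁,…,T_g)` by moving the whole branch `T q` (minus its root
`u_q`) onto `u_p`: the trees `T p` and `T q` are identified at `u_p = u_q`, and the branch
at `u_q` becomes the single vertex `u_q`. -/
def moveBranch {g : ℕ} [NeZero g] {V : Fin g → Type*} (T : ∀ i, SimpleGraph (V i))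
    (r : ∀ i, V i) (p q : Fin g) : SimpleGraph (Σ i, V i) :=
  SimpleGraph.fromRel fun a b =>
    ((∃ (i : Fin g) (x y : V i), a = ⟨i, x⟩ ∧ b = ⟨i, y⟩ ∧ (T i).Adj x y) ∧
      a ≠ ⟨q, r q⟩ ∧ b ≠ ⟨q, r q⟩) ∨
    (∃ c : V q, a = ⟨p, r p⟩ ∧ b = ⟨q, c⟩ ∧ (T q).Adj (r q) c) ∨
    (∃ i : Fin g, a = ⟨i, r i⟩ ∧ b = ⟨i + 1, r (i + 1)⟩)

/-!
Distances in `moveBranch T r p q` are explicit. Call the non-root vertices of `T q` *moved*. The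
pieces of the graph are the branches, except that branch `q` splits into its root and its moved
vertices; each piece hangs from the cycle at the root of its branch, except that the moved
vertices hang from `u_p`. Within a piece the distance is the tree distance; otherwise it is
depth + cycle distance between the attachment points + depth. This is verified through the
characterisation of graph distance as the function that vanishes on the diagonal, satisfies the
triangle inequality, is at most one on edges and is attained by walks.

Since `moveBranch T r q q = cycleTrees T r`, comparing the formula at `p` and at `q` gives
`d_G(u, v) - d_{G₁}(u, v) = χ u * ψ v + ψ u * χ v`, where `χ` is the indicator of the moved
vertices and `ψ v = d(u_q, u_v) - d(u_p, u_v)` off them; summing over all pairs yields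
`W(G) - W(G₁) = (n_q - 1) * ∑ ψ`. The two differences are then `A + (n_q - 1) S` and
`A - (n_p - 1) S` with `A > 0`, so one of them is positive.
-/
namespace SimpleGraph

variable {X Y : Type*} {G : SimpleGraph X}

theorem dist_eq_of_triangle_of_exists_walk (D : X → X → ℕ) (hself : ∀ u, D u u = 0)
    (htri : ∀ a b c, D a c ≤ D a b + D b c) (hadj : ∀ a b, G.Adj a b → D a b ≤ 1)
    (hwalk : ∀ u v, ∃ w : G.Walk u v, w.length ≤ D u v) (u v : X) :
    G.dist u v = D u v := by
  have hlower : ∀ {a b} (w : G.Walk a b), D a b ≤ w.length := by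
    intro a b w
    induction w with
    | nil => simp [hself]
    | @cons a b c h w ih =>
      rw [Walk.length_cons]
      linarith [htri a b c, hadj a b h]
  obtain ⟨w, hw⟩ := hwalk u v
  obtain ⟨w', hw'⟩ := Reachable.exists_walk_length_eq_dist ⟨w⟩
  exact le_antisymm ((dist_le w).trans hw) (hw' ▸ hlower w')

theorem Connected.exists_walk_map_length_le {H : SimpleGraph Y} (hH : H.Connected)
    (φ : H →g G) (x y : Y) : ∃ w : G.Walk (φ x) (φ y), w.length ≤ H.dist x y := by
  obtain ⟨w, hw⟩ := hH.exists_walk_length_eq_dist x y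
  exact ⟨w.map φ, by rw [Walk.length_map, hw]⟩

theorem cycleGraph_connected_of_neZero {g : ℕ} [NeZero g] : (cycleGraph g).Connected := by
  obtain ⟨n, rfl⟩ := Nat.exists_eq_succ_of_ne_zero (NeZero.ne g)
  exact cycleGraph_connected

theorem cycleGraph_adj_succ {g : ℕ} [NeZero g] {i : Fin g} (h : i ≠ i + 1) :
    (cycleGraph g).Adj i (i + 1) := by
  have hg : 1 < g := by
    by_contra! hg
    have : Subsingleton (Fin g) := Fin.subsingleton_iff_le_one.mpr hg
    exact h (Subsingleton.elim _ _)
  rw [cycleGraph_adj', add_sub_cancel_left, Fin.val_one', Nat.mod_eq_of_lt hg]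
  exact Or.inr rfl

theorem cycleGraph_dist_succ_le {g : ℕ} [NeZero g] (i : Fin g) :
    (cycleGraph g).dist i (i + 1) ≤ 1 := by
  by_cases h : i = i + 1
  · rw [← h, dist_self]; exact zero_le_one
  · exact (dist_eq_one_iff_adj.mpr (cycleGraph_adj_succ h)).le

theorem eq_add_one_or_eq_add_one_of_cycleGraph_adj {g : ℕ} [NeZero g] {i j : Fin g}
    (h : (cycleGraph g).Adj i j) : j = i + 1 ∨ i = j + 1 := by
  have sub_eq_one {a b : Fin g} (hab : (a - b).val = 1) : a = b + 1 := by
    rw [← sub_eq_iff_eq_add']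
    ext
    rw [hab, Fin.val_one', Nat.mod_eq_of_lt (hab ▸ (a - b).isLt)]
  rcases cycleGraph_adj'.mp h with h | h
  · exact Or.inr (sub_eq_one h)
  · exact Or.inl (sub_eq_one h)

end SimpleGraph

theorem Finset.sum_univ_eq_add_add_sum_filter {ι M : Type*} [Fintype ι] [DecidableEq ι]
    [AddCommMonoid M] (f : ι → M) {p q : ι} (hpq : p ≠ q) :
    ∑ i, f i = f p + f q + ∑ i ∈ univ.filter (fun i => i ≠ p ∧ i ≠ q), f i := by
  rw [← sum_filter_not_add_sum_filter univ (fun i => i ≠ p ∧ i ≠ q)]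
  congr 1
  rw [← sum_pair hpq]
  congr 1
  ext i
  by_cases hp : i = p <;> simp [hp, or_iff_not_imp_left]

theorem two_dvd_sum_sum_of_symm {X : Type*} [Fintype X] (f : X → X → ℕ)
    (hsymm : ∀ u v, f u v = f v u) (hdiag : ∀ u, f u u = 0) : 2 ∣ ∑ u, ∑ v, f u v := by
  rw [← ZMod.natCast_eq_zero_iff, ← Finset.sum_product', Nat.cast_sum]
  refine sum_ninvolution Prod.swap (fun a => ?_) (fun ⟨u, v⟩ hne he => hne ?_)
    (fun a => mem_univ _) Prod.swap_swap
  · rw [Prod.fst_swap, Prod.snd_swap, hsymm a.2, ← two_mul]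
    exact mul_eq_zero_of_left rfl _
  · obtain rfl : v = u := congrArg Prod.fst he
    rw [hdiag, Nat.cast_zero]

theorem two_mul_wienerIndex {X : Type*} [Fintype X] (G : SimpleGraph X) :
    2 * (wienerIndex G : ℤ) = ∑ u, ∑ v, (G.dist u v : ℤ) := by
  have hdvd := two_dvd_sum_sum_of_symm G.dist (fun _ _ => dist_comm) (fun _ => dist_self)
  rw [wienerIndex]
  exact_mod_cast Nat.mul_div_cancel' hdvd

theorem min_lt_of_sub_eq_mul {w w₁ w₂ : ℕ} {m n d S : ℤ} (hm : 0 < m) (hn : 0 < n) (hd : 0 < d)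
    (h₁ : (w : ℤ) - w₁ = n * (m * d + S)) (h₂ : (w : ℤ) - w₂ = m * (n * d + -S)) :
    min w₁ w₂ < w := by
  rw [min_lt_iff]
  rcases le_or_gt 0 S with hS | hS
  · have := mul_pos hn (add_pos_of_pos_of_nonneg (mul_pos hm hd) hS)
    left
    zify
    linarith
  · have := mul_pos hm (add_pos (mul_pos hn hd) (neg_pos.mpr hS))
    right
    zify
    linarith

namespace CycleTrees

variable {g : ℕ} {V : Fin g → Type*} (T : ∀ i, SimpleGraph (V i)) (r : ∀ i, V i)

/-- The distance inside a branch (`0` between different branches, where it is never used). -/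
noncomputable def branchDist : (Σ i, V i) → (Σ i, V i) → ℕ
  | ⟨i, x⟩, ⟨j, y⟩ => if h : i = j then (T j).dist (h ▸ x) y else 0

noncomputable def rootDist (v : Σ i, V i) : ℕ := branchDist T v ⟨v.1, r v.1⟩

def IsMoved (q : Fin g) (v : Σ i, V i) : Prop := v.1 = q ∧ v ≠ ⟨q, r q⟩

open Classical in
noncomputable def anchor (p q : Fin g) (v : Σ i, V i) : Fin g :=
  if IsMoved r q v then p else v.1

def SamePiece (q : Fin g) (u v : Σ i, V i) : Prop :=
  u.1 = v.1 ∧ (IsMoved r q u ↔ IsMoved r q v)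

open Classical in
noncomputable def moveDist (p q : Fin g) (u v : Σ i, V i) : ℕ :=
  if SamePiece r q u v then branchDist T u v
  else rootDist T r u + (cycleGraph g).dist (anchor r p q u) (anchor r p q v) + rootDist T r v

variable {T r} {p q : Fin g}

@[simp]
theorem branchDist_mk {i : Fin g} (x y : V i) : branchDist T ⟨i, x⟩ ⟨i, y⟩ = (T i).dist x y := by
  simp [branchDist]

@[simp]
theorem rootDist_mk {i : Fin g} (x : V i) : rootDist T r ⟨i, x⟩ = (T i).dist x (r i) :=
  branchDist_mk x (r i)

theorem branchDist_comm (u v : Σ i, V i) : branchDist T u v = branchDist T v u := by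
  obtain ⟨i, x⟩ := u
  obtain ⟨j, y⟩ := v
  by_cases h : i = j
  · subst h
    simp [dist_comm]
  · simp [branchDist, h, Ne.symm h]

theorem branchDist_triangle (hT : ∀ i, (T i).Connected) {a b c : Σ i, V i} (hab : a.1 = b.1)
    (hbc : b.1 = c.1) : branchDist T a c ≤ branchDist T a b + branchDist T b c := by
  obtain ⟨i, x⟩ := a
  obtain ⟨j, y⟩ := b
  obtain ⟨k, z⟩ := c
  dsimp only at hab hbc
  subst hab hbc
  simpa using (hT i).dist_triangle

theorem anchor_of_isMoved {v : Σ i, V i} (h : IsMoved r q v) : anchor r p q v = p := if_pos h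

theorem anchor_of_not_isMoved {v : Σ i, V i} (h : ¬IsMoved r q v) : anchor r p q v = v.1 :=
  if_neg h

theorem anchor_self (v : Σ i, V i) : anchor r q q v = v.1 := by
  by_cases h : IsMoved r q v
  · rw [anchor_of_isMoved h, h.1]
  · exact anchor_of_not_isMoved h

theorem not_isMoved_mk_root (i : Fin g) : ¬IsMoved r q ⟨i, r i⟩ := by
  rintro ⟨rfl, h⟩
  exact h rfl

theorem SamePiece.symm {u v : Σ i, V i} (h : SamePiece r q u v) : SamePiece r q v u :=
  ⟨h.1.symm, h.2.symm⟩

theorem SamePiece.trans {a b c : Σ i, V i} (hab : SamePiece r q a b) (hbc : SamePiece r q b c) :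
    SamePiece r q a c :=
  ⟨hab.1.trans hbc.1, hab.2.trans hbc.2⟩

theorem SamePiece.anchor_eq {u v : Σ i, V i} (h : SamePiece r q u v) :
    anchor r p q u = anchor r p q v := by
  by_cases hu : IsMoved r q u
  · rw [anchor_of_isMoved hu, anchor_of_isMoved (h.2.mp hu)]
  · rw [anchor_of_not_isMoved hu, anchor_of_not_isMoved (mt h.2.mpr hu), h.1]

theorem moveDist_of_samePiece {u v : Σ i, V i} (h : SamePiece r q u v) :
    moveDist T r p q u v = branchDist T u v := if_pos h

theorem moveDist_of_not_samePiece {u v : Σ i, V i} (h : ¬SamePiece r q u v) :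
    moveDist T r p q u v =
      rootDist T r u + (cycleGraph g).dist (anchor r p q u) (anchor r p q v) + rootDist T r v :=
  if_neg h

theorem rootDist_le_branchDist_add (hT : ∀ i, (T i).Connected) {u v : Σ i, V i}
    (h : u.1 = v.1) : rootDist T r u ≤ branchDist T u v + rootDist T r v := by
  obtain ⟨i, x⟩ := u
  obtain ⟨j, y⟩ := v
  dsimp only at h
  subst h
  simpa using (hT i).dist_triangle

theorem branchDist_le_rootDist_add (hT : ∀ i, (T i).Connected) {u v : Σ i, V i}
    (h : u.1 = v.1) : branchDist T u v ≤ rootDist T r u + rootDist T r v := by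
  obtain ⟨i, x⟩ := u
  obtain ⟨j, y⟩ := v
  dsimp only at h
  subst h
  simpa [dist_comm (u := y)] using (hT i).dist_triangle

theorem SamePiece.eq_root_iff {u v : Σ i, V i} (h : SamePiece r q u v) :
    u = ⟨q, r q⟩ ↔ v = ⟨q, r q⟩ := by
  have key {a b : Σ i, V i} (h : SamePiece r q a b) (ha : a = ⟨q, r q⟩) : b = ⟨q, r q⟩ := by
    subst ha
    by_contra hb
    exact not_isMoved_mk_root q (h.2.mpr ⟨h.1.symm, hb⟩)
  exact ⟨key h, key h.symm⟩

theorem moveDist_self (u : Σ i, V i) : moveDist T r p q u u = 0 := by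
  obtain ⟨i, x⟩ := u
  rw [moveDist_of_samePiece ⟨rfl, Iff.rfl⟩, branchDist_mk, dist_self]

theorem moveDist_comm (u v : Σ i, V i) : moveDist T r p q u v = moveDist T r p q v u := by
  by_cases h : SamePiece r q u v
  · rw [moveDist_of_samePiece h, moveDist_of_samePiece h.symm, branchDist_comm]
  · rw [moveDist_of_not_samePiece h, moveDist_of_not_samePiece (mt SamePiece.symm h), dist_comm]
    ring

theorem moveDist_mk_root_mk_root (i j : Fin g) :
    moveDist T r p q ⟨i, r i⟩ ⟨j, r j⟩ = (cycleGraph g).dist i j := by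
  by_cases h : i = j
  · subst h
    rw [moveDist_self, dist_self]
  · rw [moveDist_of_not_samePiece (fun hs => h hs.1), anchor_of_not_isMoved (not_isMoved_mk_root i),
      anchor_of_not_isMoved (not_isMoved_mk_root j)]
    simp

variable (r) in
open Classical in
noncomputable def movedIndicator (q : Fin g) (v : Σ i, V i) : ℤ :=
  if IsMoved r q v then 1 else 0

variable (r) in
open Classical in
/-- How much farther each moved vertex is from `v` in `cycleTrees T r` than in
`moveBranch T r p q`. -/
noncomputable def moveGain (p q : Fin g) (v : Σ i, V i) : ℤ :=
  if IsMoved r q v then 0 else (cycleGraph g).dist q v.1 - (cycleGraph g).dist p v.1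

theorem moveDist_sub_moveDist (u v : Σ i, V i) :
    (moveDist T r q q u v : ℤ) - moveDist T r p q u v =
      movedIndicator r q u * moveGain r p q v + moveGain r p q u * movedIndicator r q v := by
  by_cases hs : SamePiece r q u v
  · rw [moveDist_of_samePiece hs, moveDist_of_samePiece hs, sub_self]
    by_cases hu : IsMoved r q u <;> simp [movedIndicator, moveGain, hu, hs.2.mp, mt hs.2.mpr]
  rw [moveDist_of_not_samePiece hs, moveDist_of_not_samePiece hs, anchor_self, anchor_self]
  by_cases hu : IsMoved r q u <;> by_cases hv : IsMoved r q v
  · exact absurd ⟨hu.1.trans hv.1.symm, iff_of_true hu hv⟩ hs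
  · simp [movedIndicator, moveGain, hu, hv, anchor_of_isMoved hu, anchor_of_not_isMoved hv, hu.1]
  · simp [movedIndicator, moveGain, hu, hv, anchor_of_isMoved hv, anchor_of_not_isMoved hu, hv.1,
      dist_comm (v := q), dist_comm (v := p)]
  · simp [movedIndicator, moveGain, hu, hv, anchor_of_not_isMoved hu, anchor_of_not_isMoved hv]

theorem movedIndicator_mk_of_ne {i : Fin g} (hi : i ≠ q) (x : V i) :
    movedIndicator r q ⟨i, x⟩ = 0 := by
  simp [movedIndicator, IsMoved, hi]

theorem sum_movedIndicator [∀ i, Fintype (V i)] (q : Fin g) :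
    ∑ v, movedIndicator r q v = Fintype.card (V q) - 1 := by
  classical
  have hq (x : V q) : movedIndicator r q ⟨q, x⟩ = 1 - if x = r q then 1 else 0 := by
    by_cases hx : x = r q <;> simp [movedIndicator, IsMoved, hx]
  rw [Fintype.sum_sigma,
    Fintype.sum_eq_single q fun i hi => sum_eq_zero fun x _ => movedIndicator_mk_of_ne hi x]
  simp [hq, sum_sub_distrib]

theorem moveGain_eq (v : Σ i, V i) : moveGain r p q v =
    ((cycleGraph g).dist q v.1 - (cycleGraph g).dist p v.1) -
      movedIndicator r q v * ((cycleGraph g).dist q q - (cycleGraph g).dist p q) := by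
  by_cases hv : IsMoved r q v
  · simp [moveGain, movedIndicator, hv, hv.1]
  · simp [moveGain, movedIndicator, hv]

theorem sum_moveGain [∀ i, Fintype (V i)] (hpq : p ≠ q) :
    ∑ v, moveGain r p q v =
      ((Fintype.card (V p) : ℤ) - 1) * (cycleGraph g).dist p q +
        ∑ i ∈ Finset.univ.filter (fun i => i ≠ p ∧ i ≠ q),
          (Fintype.card (V i) : ℤ) * ((cycleGraph g).dist q i - (cycleGraph g).dist p i) := by
  simp only [moveGain_eq]
  rw [sum_sub_distrib, ← sum_mul, sum_movedIndicator, Fintype.sum_sigma]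
  simp only [sum_const, card_univ, nsmul_eq_mul]
  rw [Finset.sum_univ_eq_add_add_sum_filter _ hpq, dist_self, dist_self, dist_comm (u := q)]
  ring

variable [NeZero g]

theorem moveDist_triangle (hT : ∀ i, (T i).Connected) (a b c : Σ i, V i) :
    moveDist T r p q a c ≤ moveDist T r p q a b + moveDist T r p q b c := by
  by_cases hab : SamePiece r q a b <;> by_cases hbc : SamePiece r q b c
  · rw [moveDist_of_samePiece hab, moveDist_of_samePiece hbc,
      moveDist_of_samePiece (hab.trans hbc)]
    exact branchDist_triangle hT hab.1 hbc.1
  · have hac : ¬SamePiece r q a c := fun hac => hbc (hab.symm.trans hac)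
    rw [moveDist_of_samePiece hab, moveDist_of_not_samePiece hbc, moveDist_of_not_samePiece hac,
      hab.anchor_eq]
    linarith [rootDist_le_branchDist_add (r := r) hT hab.1]
  · have hac : ¬SamePiece r q a c := fun hac => hab (hac.trans hbc.symm)
    rw [moveDist_of_not_samePiece hab, moveDist_of_samePiece hbc, moveDist_of_not_samePiece hac,
      hbc.anchor_eq]
    linarith [rootDist_le_branchDist_add (r := r) hT hbc.1.symm, branchDist_comm (T := T) b c]
  · rw [moveDist_of_not_samePiece hab, moveDist_of_not_samePiece hbc]
    by_cases hac : SamePiece r q a c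
    · rw [moveDist_of_samePiece hac]
      linarith [branchDist_le_rootDist_add (r := r) hT hac.1]
    · rw [moveDist_of_not_samePiece hac]
      linarith [cycleGraph_connected_of_neZero.dist_triangle (u := anchor r p q a)
        (v := anchor r p q b) (w := anchor r p q c)]

theorem moveBranch_adj_mk_mk {i : Fin g} {x y : V i} (h : (T i).Adj x y)
    (hx : (⟨i, x⟩ : Σ i, V i) ≠ ⟨q, r q⟩) (hy : (⟨i, y⟩ : Σ i, V i) ≠ ⟨q, r q⟩) :
    (moveBranch T r p q).Adj ⟨i, x⟩ ⟨i, y⟩ := by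
  rw [moveBranch, fromRel_adj]
  exact ⟨by simp [h.ne], Or.inl (Or.inl ⟨⟨i, x, y, rfl, rfl, h⟩, hx, hy⟩)⟩

theorem moveBranch_adj_root_mk {c : V q} (h : (T q).Adj (r q) c) :
    (moveBranch T r p q).Adj ⟨p, r p⟩ ⟨q, c⟩ := by
  rw [moveBranch, fromRel_adj]
  refine ⟨?_, Or.inl (Or.inr (Or.inl ⟨c, rfl, rfl, h⟩))⟩
  rintro ⟨⟩
  exact h.ne rfl

theorem moveBranch_adj_root_succ {i : Fin g} (h : i ≠ i + 1) :
    (moveBranch T r p q).Adj ⟨i, r i⟩ ⟨i + 1, r (i + 1)⟩ := by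
  rw [moveBranch, fromRel_adj]
  exact ⟨fun he => h (congrArg Sigma.fst he), Or.inl (Or.inr (Or.inr ⟨i, rfl, rfl⟩))⟩

theorem moveDist_le_one_of_adj {a b : Σ i, V i} (h : (moveBranch T r p q).Adj a b) :
    moveDist T r p q a b ≤ 1 := by
  suffices key : ∀ a b : Σ i, V i,
      ((∃ (i : Fin g) (x y : V i), a = ⟨i, x⟩ ∧ b = ⟨i, y⟩ ∧ (T i).Adj x y) ∧
        a ≠ ⟨q, r q⟩ ∧ b ≠ ⟨q, r q⟩) ∨
      (∃ c : V q, a = ⟨p, r p⟩ ∧ b = ⟨q, c⟩ ∧ (T q).Adj (r q) c) ∨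
      (∃ i : Fin g, a = ⟨i, r i⟩ ∧ b = ⟨i + 1, r (i + 1)⟩) → moveDist T r p q a b ≤ 1 by
    rw [moveBranch, fromRel_adj] at h
    rcases h.2 with h | h
    · exact key a b h
    · exact moveDist_comm (T := T) a b ▸ key b a h
  rintro a b (⟨⟨i, x, y, rfl, rfl, hxy⟩, ha, hb⟩ | ⟨c, rfl, rfl, hc⟩ | ⟨i, rfl, rfl⟩)
  · have hs : SamePiece r q ⟨i, x⟩ ⟨i, y⟩ := ⟨rfl, by simp [IsMoved, ha, hb]⟩
    rw [moveDist_of_samePiece hs, branchDist_mk, dist_eq_one_iff_adj.mpr hxy]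
  · have hmoved : IsMoved r q ⟨q, c⟩ := ⟨rfl, by simp [hc.ne']⟩
    rw [moveDist_of_not_samePiece (fun hs => not_isMoved_mk_root p (hs.2.mpr hmoved)),
      anchor_of_not_isMoved (not_isMoved_mk_root p), anchor_of_isMoved hmoved]
    simp [dist_comm (u := c), dist_eq_one_iff_adj.mpr hc]
  · rw [moveDist_mk_root_mk_root]
    exact cycleGraph_dist_succ_le i

variable (T r p q) in
open Classical in
noncomputable def branchHom (i : Fin g) : T i →g moveBranch T r p q where
  toFun x := if (⟨i, x⟩ : Σ i, V i) = ⟨q, r q⟩ then ⟨p, r p⟩ else ⟨i, x⟩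
  map_rel' {x y} h := by
    by_cases hx : (⟨i, x⟩ : Σ i, V i) = ⟨q, r q⟩
    · cases hx
      rw [if_pos rfl, if_neg (by simp [h.ne'])]
      exact moveBranch_adj_root_mk h
    by_cases hy : (⟨i, y⟩ : Σ i, V i) = ⟨q, r q⟩
    · cases hy
      rw [if_pos rfl, if_neg hx]
      exact (moveBranch_adj_root_mk h.symm).symm
    rw [if_neg hx, if_neg hy]
    exact moveBranch_adj_mk_mk h hx hy

theorem branchHom_apply_of_ne {i : Fin g} {x : V i} (h : (⟨i, x⟩ : Σ i, V i) ≠ ⟨q, r q⟩) :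
    branchHom T r p q i x = ⟨i, x⟩ := if_neg h

theorem branchHom_apply_root {i : Fin g} {x : V i} (h : (⟨i, x⟩ : Σ i, V i) ≠ ⟨q, r q⟩) :
    branchHom T r p q i (r i) = ⟨anchor r p q ⟨i, x⟩, r (anchor r p q ⟨i, x⟩)⟩ := by
  by_cases hi : i = q
  · subst hi
    rw [anchor_of_isMoved ⟨rfl, h⟩]
    exact if_pos rfl
  · rw [anchor_of_not_isMoved (fun hm => hi hm.1), branchHom_apply_of_ne (by simp [hi])]

theorem exists_walk_root_root (i j : Fin g) :
    ∃ w : (moveBranch T r p q).Walk ⟨i, r i⟩ ⟨j, r j⟩, w.length ≤ (cycleGraph g).dist i j :=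
  let φ : cycleGraph g →g moveBranch T r p q :=
    { toFun := fun k => ⟨k, r k⟩
      map_rel' := fun {k l} h => by
        rcases eq_add_one_or_eq_add_one_of_cycleGraph_adj h with rfl | rfl
        · exact moveBranch_adj_root_succ h.ne
        · exact (moveBranch_adj_root_succ h.ne.symm).symm }
  cycleGraph_connected_of_neZero.exists_walk_map_length_le φ i j

theorem exists_walk_to_anchor (hT : ∀ i, (T i).Connected) (v : Σ i, V i) :
    ∃ w : (moveBranch T r p q).Walk v ⟨anchor r p q v, r (anchor r p q v)⟩,
      w.length ≤ rootDist T r v := by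
  by_cases hv : v = ⟨q, r q⟩
  · subst hv
    rw [anchor_of_not_isMoved (not_isMoved_mk_root q)]
    exact ⟨.nil, by simp⟩
  obtain ⟨i, x⟩ := v
  obtain ⟨w, hw⟩ := (hT i).exists_walk_map_length_le (branchHom T r p q i) x (r i)
  exact ⟨w.copy (branchHom_apply_of_ne hv) (branchHom_apply_root hv), by simpa using hw⟩

theorem exists_walk_of_samePiece (hT : ∀ i, (T i).Connected) {u v : Σ i, V i}
    (h : SamePiece r q u v) :
    ∃ w : (moveBranch T r p q).Walk u v, w.length ≤ branchDist T u v := by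
  by_cases hu : u = ⟨q, r q⟩
  · obtain rfl := h.eq_root_iff.mp hu
    subst hu
    exact ⟨.nil, by simp⟩
  have hv := mt h.eq_root_iff.mpr hu
  obtain ⟨i, x⟩ := u
  obtain ⟨j, y⟩ := v
  obtain rfl : i = j := h.1
  obtain ⟨w, hw⟩ := (hT i).exists_walk_map_length_le (branchHom T r p q i) x y
  exact ⟨w.copy (branchHom_apply_of_ne hu) (branchHom_apply_of_ne hv), by simpa using hw⟩

theorem exists_walk_length_le_moveDist (hT : ∀ i, (T i).Connected) (u v : Σ i, V i) :
    ∃ w : (moveBranch T r p q).Walk u v, w.length ≤ moveDist T r p q u v := by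
  by_cases h : SamePiece r q u v
  · rw [moveDist_of_samePiece h]
    exact exists_walk_of_samePiece hT h
  rw [moveDist_of_not_samePiece h]
  obtain ⟨w₁, h₁⟩ := exists_walk_to_anchor (p := p) hT u
  obtain ⟨w₂, h₂⟩ := exists_walk_root_root (T := T) (p := p) (q := q) (anchor r p q u) (anchor r p q v)
  obtain ⟨w₃, h₃⟩ := exists_walk_to_anchor (p := p) hT v
  refine ⟨(w₁.append w₂).append w₃.reverse, ?_⟩
  simp only [Walk.length_append, Walk.length_reverse]
  omega

theorem dist_moveBranch (hT : ∀ i, (T i).Connected) (u v : Σ i, V i) :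
    (moveBranch T r p q).dist u v = moveDist T r p q u v :=
  dist_eq_of_triangle_of_exists_walk _ moveDist_self (moveDist_triangle hT)
    (fun _ _ => moveDist_le_one_of_adj) (exists_walk_length_le_moveDist hT) u v

theorem branchHom_self_apply (i : Fin g) (x : V i) : branchHom T r q q i x = ⟨i, x⟩ := by
  by_cases h : (⟨i, x⟩ : Σ i, V i) = ⟨q, r q⟩
  · exact (if_pos h).trans h.symm
  · exact branchHom_apply_of_ne h

theorem moveBranch_self (q : Fin g) : moveBranch T r q q = cycleTrees T r := by
  have treeEdge {i : Fin g} {x y : V i} (h : (T i).Adj x y) :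
      (moveBranch T r q q).Adj ⟨i, x⟩ ⟨i, y⟩ := by
    simpa only [branchHom_self_apply] using (branchHom T r q q i).map_adj h
  refine le_antisymm (fun a b h => ?_) (fun a b h => ?_)
  · rw [moveBranch, fromRel_adj] at h
    rw [cycleTrees, fromRel_adj]
    refine ⟨h.1, h.2.imp ?_ ?_⟩ <;>
      rintro (⟨⟨i, x, y, rfl, rfl, hxy⟩, -⟩ | ⟨c, rfl, rfl, hc⟩ | ⟨i, rfl, rfl⟩)
    all_goals first
      | exact Or.inl ⟨_, _, _, rfl, rfl, ‹_›⟩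
      | exact Or.inr ⟨i, rfl, rfl⟩
  · rw [cycleTrees, fromRel_adj] at h
    rcases h with ⟨hne, (⟨i, x, y, rfl, rfl, hxy⟩ | ⟨i, rfl, rfl⟩) |
      (⟨i, x, y, rfl, rfl, hxy⟩ | ⟨i, rfl, rfl⟩)⟩
    · exact treeEdge hxy
    · exact moveBranch_adj_root_succ fun he => hne (by rw [← he])
    · exact (treeEdge hxy).symm
    · exact (moveBranch_adj_root_succ fun he => hne (by rw [← he])).symm

theorem dist_cycleTrees_mk_root (hT : ∀ i, (T i).Connected) (i j : Fin g) :
    (cycleTrees T r).dist ⟨i, r i⟩ ⟨j, r j⟩ = (cycleGraph g).dist i j := by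
  rw [← moveBranch_self i, dist_moveBranch hT, moveDist_mk_root_mk_root]

theorem wienerIndex_cycleTrees_sub_wienerIndex_moveBranch [∀ i, Fintype (V i)]
    (hT : ∀ i, (T i).Connected) (hpq : p ≠ q) :
    (wienerIndex (cycleTrees T r) : ℤ) - wienerIndex (moveBranch T r p q) =
      ((Fintype.card (V q) : ℤ) - 1) *
        (((Fintype.card (V p) : ℤ) - 1) * (cycleGraph g).dist p q +
          ∑ i ∈ Finset.univ.filter (fun i => i ≠ p ∧ i ≠ q),
            (Fintype.card (V i) : ℤ) * ((cycleGraph g).dist q i - (cycleGraph g).dist p i)) := by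
  rw [← sum_movedIndicator, ← sum_moveGain hpq]
  refine mul_left_cancel₀ (two_ne_zero' ℤ) ?_
  rw [mul_sub, two_mul_wienerIndex, two_mul_wienerIndex, ← moveBranch_self q]
  simp only [dist_moveBranch hT, ← sum_sub_distrib, moveDist_sub_moveDist, sum_add_distrib,
    ← mul_sum, ← sum_mul]
  ring

end CycleTrees

theorem wiener_moveBranch_general {g : ℕ} [NeZero g] {V : Fin g → Type*}
    [∀ i, Fintype (V i)] (T : ∀ i, SimpleGraph (V i)) (r : ∀ i, V i)
    (hT : ∀ i, (T i).IsTree) (p q : Fin g) (hpq : p ≠ q)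
    (hp : 2 ≤ Fintype.card (V p)) (hq : 2 ≤ Fintype.card (V q)) :
    (wienerIndex (cycleTrees T r) : ℤ) - wienerIndex (moveBranch T r p q) =
        ((Fintype.card (V p) : ℤ) - 1) * ((Fintype.card (V q) : ℤ) - 1) *
          (cycleTrees T r).dist ⟨p, r p⟩ ⟨q, r q⟩ +
        ((Fintype.card (V q) : ℤ) - 1) *
          ∑ i ∈ Finset.univ.filter (fun i => i ≠ p ∧ i ≠ q),
            (Fintype.card (V i) : ℤ) *
              (((cycleTrees T r).dist ⟨q, r q⟩ ⟨i, r i⟩ : ℤ) -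
                (cycleTrees T r).dist ⟨p, r p⟩ ⟨i, r i⟩) ∧
      (wienerIndex (cycleTrees T r) : ℤ) - wienerIndex (moveBranch T r q p) =
        ((Fintype.card (V p) : ℤ) - 1) * ((Fintype.card (V q) : ℤ) - 1) *
          (cycleTrees T r).dist ⟨p, r p⟩ ⟨q, r q⟩ -
        ((Fintype.card (V p) : ℤ) - 1) *
          ∑ i ∈ Finset.univ.filter (fun i => i ≠ p ∧ i ≠ q),
            (Fintype.card (V i) : ℤ) *
              (((cycleTrees T r).dist ⟨q, r q⟩ ⟨i, r i⟩ : ℤ) -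
                (cycleTrees T r).dist ⟨p, r p⟩ ⟨i, r i⟩) ∧
      min (wienerIndex (moveBranch T r p q)) (wienerIndex (moveBranch T r q p)) <
        wienerIndex (cycleTrees T r) := by
  have hT' i := (hT i).connected
  simp only [CycleTrees.dist_cycleTrees_mk_root hT']
  have h₁ := CycleTrees.wienerIndex_cycleTrees_sub_wienerIndex_moveBranch (r := r) hT' hpq
  have h₂ := CycleTrees.wienerIndex_cycleTrees_sub_wienerIndex_moveBranch (r := r) hT' hpq.symm
  have hswap : ∑ i ∈ Finset.univ.filter (fun i => i ≠ q ∧ i ≠ p),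
      (Fintype.card (V i) : ℤ) * ((cycleGraph g).dist p i - (cycleGraph g).dist q i) =
      -∑ i ∈ Finset.univ.filter (fun i => i ≠ p ∧ i ≠ q),
        (Fintype.card (V i) : ℤ) * ((cycleGraph g).dist q i - (cycleGraph g).dist p i) := by
    rw [← sum_neg_distrib]
    exact sum_congr (by simp [and_comm]) fun i _ => by ring
  rw [hswap, dist_comm (u := q)] at h₂
  refine ⟨by rw [h₁]; ring, by rw [h₂]; ring, min_lt_of_sub_eq_mul ?_ ?_ ?_ h₁ h₂⟩
  · omega
  · omega
  · exact_mod_cast cycleGraph_connected_of_neZero.pos_dist_of_ne hpq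

/-- Lemma 2.8: with `G₁` obtained by moving branch `T q` onto `u_p` and `G₂` obtained by
moving branch `T p` onto `u_q`, the differences `W(G) − W(G₁)` and `W(G) − W(G₂)` are given
by explicit formulas, and consequently `W(G) > min{W(G₁), W(G₂)}`. -/
theorem wiener_moveBranch {g : ℕ} [NeZero g] (hg : 3 ≤ g) {V : Fin g → Type*}
    [∀ i, Fintype (V i)] (T : ∀ i, SimpleGraph (V i)) (r : ∀ i, V i)
    (hT : ∀ i, (T i).IsTree) (p q : Fin g) (hpq : p ≠ q)
    (hp : 2 ≤ Fintype.card (V p)) (hq : 2 ≤ Fintype.card (V q)) :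
    (wienerIndex (cycleTrees T r) : ℤ) - wienerIndex (moveBranch T r p q) =
        ((Fintype.card (V p) : ℤ) - 1) * ((Fintype.card (V q) : ℤ) - 1) *
          (cycleTrees T r).dist ⟨p, r p⟩ ⟨q, r q⟩ +
        ((Fintype.card (V q) : ℤ) - 1) *
          ∑ i ∈ Finset.univ.filter (fun i => i ≠ p ∧ i ≠ q),
            (Fintype.card (V i) : ℤ) *
              (((cycleTrees T r).dist ⟨q, r q⟩ ⟨i, r i⟩ : ℤ) -
                (cycleTrees T r).dist ⟨p, r p⟩ ⟨i, r i⟩) ∧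
      (wienerIndex (cycleTrees T r) : ℤ) - wienerIndex (moveBranch T r q p) =
        ((Fintype.card (V p) : ℤ) - 1) * ((Fintype.card (V q) : ℤ) - 1) *
          (cycleTrees T r).dist ⟨p, r p⟩ ⟨q, r q⟩ -
        ((Fintype.card (V p) : ℤ) - 1) *
          ∑ i ∈ Finset.univ.filter (fun i => i ≠ p ∧ i ≠ q),
            (Fintype.card (V i) : ℤ) *
              (((cycleTrees T r).dist ⟨q, r q⟩ ⟨i, r i⟩ : ℤ) -
                (cycleTrees T r).dist ⟨p, r p⟩ ⟨i, r i⟩) ∧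
      min (wienerIndex (moveBranch T r p q)) (wienerIndex (moveBranch T r q p)) <
        wienerIndex (cycleTrees T r) :=
  wiener_moveBranch_general T r hT p q hpq hp hq
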